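/- arXiv:1501.07108 — 3 statements merged into one kernel-verified Lean document; each statement's English description precedes it below -/
import Mathlib

section
/- If a graph G admits a semi-transitive orientation, then G is word-representable. Moreover, if G is not complete, then G is 2(n−κ)-word-representable, where n is the number of vertices and κ is the size of a maximum clique of G. -/
variable {V : Type*}

/-- Letters `x` and `y` alternate in the word `W`: the subword induced by the two
letters has no two equal consecutive letters. -/
def Alternate [DecidableEq V] (W : List V) (x y : V) : Prop :=
  (W.filter (fun z => z = x ∨ z = y)).Chain' (· ≠ ·)

/-- A word is `k`-uniform if every letter of the alphabet occurs exactly `k` times. -/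
def Uniform [DecidableEq V] (W : List V) (k : ℕ) : Prop :=
  ∀ x : V, W.count x = k

/-- A word `W` represents the graph `G`: every vertex occurs in `W` and two distinct
vertices are adjacent iff they alternate in `W`. -/
def Represents [DecidableEq V] (W : List V) (G : SimpleGraph V) : Prop :=
  (∀ x : V, x ∈ W) ∧ ∀ x y : V, x ≠ y → (G.Adj x y ↔ Alternate W x y)

def WordRepresentable [DecidableEq V] (G : SimpleGraph V) : Prop :=
  ∃ W : List V, Represents W G

def KWordRepresentable [DecidableEq V] (G : SimpleGraph V) (k : ℕ) : Prop :=
  ∃ W : List V, Uniform W k ∧ Represents W G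

/-- A digraph (relation) is acyclic if it has no directed cycle. -/
def Acyclic (E : V → V → Prop) : Prop :=
  ∀ x : V, ¬ Relation.TransGen E x x

/-- A digraph is semi-transitive if it is acyclic and for every directed path
`v 0 → v 1 → ⋯ → v k` such that the arc `v 0 → v k` is present, all arcs
`v i → v j` for `i < j` are present. -/
def SemiTransitive (E : V → V → Prop) : Prop :=
  Acyclic E ∧ ∀ (k : ℕ) (v : Fin (k + 1) → V),
    (∀ i : Fin k, E (v i.castSucc) (v i.succ)) →
    E (v 0) (v (Fin.last k)) →
    ∀ i j : Fin (k + 1), i < j → E (v i) (v j)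

/-- `E` is an orientation of the graph `G`. -/
def IsOrientation (G : SimpleGraph V) (E : V → V → Prop) : Prop :=
  ∀ x y : V, G.Adj x y ↔ (E x y ∨ E y x)

/-- The word `W` covers the set `A` of non-edges of the digraph `E` orienting `G`:
`W` is `k`-uniform for some `k`; its initial permutation is a topological sort of `E`
(first occurrences respect reachability); `G` is a subgraph of the graph represented
by `W`; and every pair in `A` is a non-edge of the graph represented by `W`. -/
def Covers [DecidableEq V] (W : List V) (G : SimpleGraph V) (E : V → V → Prop)
    (A : Set (V × V)) : Prop :=
  (∃ k : ℕ, Uniform W k) ∧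
  (∀ u v : V, Relation.TransGen E u v → W.idxOf u < W.idxOf v) ∧
  (∀ x y : V, G.Adj x y → Alternate W x y) ∧
  ∀ p ∈ A, ¬ Alternate W p.1 p.2

/-- `G` is representable by a concatenation of `k` permutations of its vertex set. -/
def PermutationallyRepresentable [DecidableEq V] (G : SimpleGraph V) (k : ℕ) : Prop :=
  ∃ Ps : List (List V), Ps.length = k ∧
    (∀ P ∈ Ps, P.Nodup ∧ ∀ x : V, x ∈ P) ∧
    Represents Ps.flatten G

/-!
Fix a topological order of the semi-transitive orientation `E`. For each vertex `v` we build a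
block: a word containing every vertex exactly twice, obtained by putting the two copies of each
vertex into nine slots according to how it is related to `v`, each slot listed in topological
order. The slots are chosen so that every arc `x → y` satisfies
`first x ≤ first y < second x ≤ second y`, hence induces the pattern `x y x y` in every block;
this is where semi-transitivity enters, since a shortcut through `v` would break one of these
inequalities. Between the two copies of `v` only neighbours of `v` occur, so `v v` is a factor of
the block restricted to `{u, v}` for every non-neighbour `u`. Hence the concatenation of the
blocks of any set of vertices meeting every non-edge represents `G`: all vertices give
word-representability, and the complement of a maximum clique gives a `2(n - κ)`-uniform
representation.
-/

open Relation

namespace SemiTransitive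

variable {E : V → V → Prop}

theorem pairwise (hst : SemiTransitive E) {L : List V} (hL : L.IsChain E) (hne : L ≠ [])
    (h : E (L.head hne) (L.getLast hne)) : L.Pairwise E := by
  obtain ⟨k, hk⟩ : ∃ k, L.length = k + 1 :=
    Nat.exists_eq_succ_of_ne_zero (List.length_pos_iff.2 hne).ne'
  have hv := hst.2 k (fun i => L[i.val]) (fun i => hL.getElem i (by omega))
    (by simpa [List.head_eq_getElem, List.getLast_eq_getElem, hk] using h)
  exact List.pairwise_iff_getElem.2 fun i j _ _ hij => hv ⟨i, by omega⟩ ⟨j, by omega⟩ hij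

theorem arcs_of_transGen (hst : SemiTransitive E) {a b c : V} (hab : E a b)
    (hac : TransGen E a c) (hcb : TransGen E c b) : E a c ∧ E c b := by
  obtain ⟨l₁, hl₁, hc⟩ := List.exists_isChain_cons_of_relationReflTransGen hac.to_reflTransGen
  obtain ⟨l₂, hl₂, hb⟩ := List.exists_isChain_cons_of_relationReflTransGen hcb.to_reflTransGen
  have hl₁ne : l₁ ≠ [] := by rintro rfl; exact hst.1 a (by simpa [← hc] using hac)
  have hl₂ne : l₂ ≠ [] := by rintro rfl; exact hst.1 c (by simpa [← hb] using hcb)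
  rw [List.getLast_cons hl₁ne] at hc
  rw [List.getLast_cons hl₂ne] at hb
  have hchain : ((a :: l₁) ++ l₂).IsChain E :=
    hl₁.append hl₂.tail fun x hx y hy => by
      rw [List.getLast?_eq_some_getLast (List.cons_ne_nil _ _), List.getLast_cons hl₁ne, hc,
        Option.mem_some_iff] at hx
      exact hx ▸ hl₂.rel_head? hy
  have hpw := hst.pairwise hchain (by simp) (by simpa [hl₂ne, hb] using hab)
  rw [List.cons_append, List.pairwise_cons, List.pairwise_append] at hpw
  have hc₁ : c ∈ l₁ := hc ▸ List.getLast_mem hl₁ne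
  have hb₂ : b ∈ l₂ := hb ▸ List.getLast_mem hl₂ne
  exact ⟨hpw.1 c (List.mem_append_left _ hc₁), hpw.2.2.2 c hc₁ b hb₂⟩

end SemiTransitive

section SlotWord

variable {α : Type*}

theorem List.Pairwise.eq_pair {l : List α} {x y : α}
    (h : l.Pairwise fun w z => w = x ∧ z = y) (hx : x ∈ l) (hy : y ∈ l) (hxy : x ≠ y) :
    l = [x, y] := by
  match l, h with
  | [], _ => simp at hx
  | [_], _ => simp_all
  | [_, _], h => simp_all
  | a :: b :: c :: _, h =>
    simp only [List.pairwise_cons] at h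
    exact (hxy ((h.2.1 c (by simp)).1.symm.trans (h.1 b (by simp)).2)).elim

theorem List.Nodup.filter_eq_singleton [DecidableEq α] {l : List α} (hl : l.Nodup) {v : α}
    (hv : v ∈ l) : l.filter (· = v) = [v] := by
  rw [List.filter_eq, List.count_eq_one_of_mem hl hv, List.replicate_one]

theorem List.range'_eq_range'_append_range' {s t n : ℕ} (h₁ : s ≤ t) (h₂ : t ≤ s + n) :
    List.range' s n = List.range' s (t - s) ++ List.range' t (s + n - t) :=
  List.range'_eq_append_iff.2 ⟨t - s, by omega, rfl, by congr 1 <;> omega⟩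

theorem List.Pairwise.filter_lt_append_filter_le {c : α → ℕ} {l : List α}
    (hl : l.Pairwise fun u w => c u ≤ c w) (t : ℕ) :
    l.filter (fun u => c u < t) ++ l.filter (fun u => t ≤ c u) = l := by
  induction l with
  | nil => rfl
  | cons u l ih =>
    rw [List.pairwise_cons] at hl
    by_cases hu : c u < t
    · simp [hu, ih hl.2]
    · have hge : ∀ w ∈ l, t ≤ c w := fun w hw => by have := hl.1 w hw; omega
      have hlt : l.filter (fun u => c u < t) = [] :=
        List.filter_eq_nil_iff.2 fun w hw => by simpa using hge w hw
      have hle : l.filter (fun u => t ≤ c u) = l :=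
        List.filter_eq_self.2 fun w hw => by simpa using hge w hw
      rw [List.filter_cons_of_neg (by simpa using hu),
        List.filter_cons_of_pos (by simpa using hu), hlt, hle, List.nil_append]

theorem List.Pairwise.flatMap_range'_filter {c : α → ℕ} {l : List α}
    (hl : l.Pairwise fun u w => c u ≤ c w) (m k : ℕ) :
    (List.range' m k).flatMap (fun i => l.filter fun u => c u = i) =
      l.filter fun u => m ≤ c u ∧ c u < m + k := by
  induction k with
  | zero => simp
  | succ k ih =>
    rw [List.range'_1_concat, List.flatMap_append, ih, List.flatMap_singleton]
    conv_rhs => rw [← (hl.filter _).filter_lt_append_filter_le (m + k)]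
    rw [List.filter_filter, List.filter_filter]
    congr 1 <;> refine List.filter_congr fun u _ => ?_
    all_goals rw [← Bool.decide_and, decide_eq_decide]; omega

def slotWord (l : List α) (a b : α → ℕ) (n : ℕ) : List α :=
  (List.range n).flatMap fun i => l.filter fun u => a u = i ∨ b u = i

theorem filter_slotWord (p : α → Bool) (l : List α) (a b : α → ℕ) (n : ℕ) :
    (slotWord l a b n).filter p = slotWord (l.filter p) a b n := by
  simp only [slotWord, List.filter_flatMap, List.filter_filter, Bool.and_comm]

theorem List.Pairwise.flatMap_range'_slots_eq_append_self {a b : α → ℕ} {l : List α}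
    (hl : l.Pairwise fun u w => a u ≤ a w ∧ b u ≤ b w) {m t k : ℕ}
    (hkeys : ∀ u ∈ l, m ≤ a u ∧ a u < t ∧ t ≤ b u ∧ b u < m + k) :
    (List.range' m k).flatMap (fun i => l.filter fun u => a u = i ∨ b u = i) = l ++ l := by
  by_cases hnil : l = []
  · simp [hnil]
  obtain ⟨u, hu⟩ := l.exists_mem_of_ne_nil hnil
  have := hkeys u hu
  rw [List.range'_eq_range'_append_range' (t := t) (by omega) (by omega), List.flatMap_append]
  congr 1
  · rw [List.flatMap_congr (g := fun i => l.filter fun u => a u = i) fun i hi =>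
        List.filter_congr fun u hu => ?_, (hl.imp And.left).flatMap_range'_filter,
      List.filter_eq_self.2 fun u hu => ?_]
    · have := hkeys u hu; simpa using by omega
    · have := hkeys u hu; have := List.mem_range'_1.1 hi; simp only [decide_eq_decide]; omega
  · rw [List.flatMap_congr (g := fun i => l.filter fun u => b u = i) fun i hi =>
        List.filter_congr fun u hu => ?_, (hl.imp And.right).flatMap_range'_filter,
      List.filter_eq_self.2 fun u hu => ?_]
    · have := hkeys u hu; simpa using by omega
    · have := hkeys u hu; have := List.mem_range'_1.1 hi; simp only [decide_eq_decide]; omega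

theorem List.Pairwise.slotWord_eq_append_self {a b : α → ℕ} {l : List α}
    (hl : l.Pairwise fun u w => a u ≤ a w ∧ b u ≤ b w) {t n : ℕ}
    (hkeys : ∀ u ∈ l, a u < t ∧ t ≤ b u ∧ b u < n) : slotWord l a b n = l ++ l := by
  rw [slotWord, List.range_eq_range']
  exact hl.flatMap_range'_slots_eq_append_self (m := 0) (t := t) (k := n) fun u hu => by
    have := hkeys u hu; omega

theorem count_slotWord [DecidableEq α] {l : List α} (hl : l.Nodup) {u : α} (hu : u ∈ l)
    {a b : α → ℕ} {n : ℕ} (hab : a u < b u) (hn : b u < n) :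
    (slotWord l a b n).count u = 2 := by
  rw [List.count_eq_length_filter, filter_slotWord, List.filter_beq,
    List.count_eq_one_of_mem hl hu, List.replicate_one,
    (List.pairwise_singleton _ _).slotWord_eq_append_self (t := b u)]
  · rfl
  · simpa using ⟨hab, hn⟩

theorem infix_slotWord [DecidableEq α] {l : List α} (hl : l.Nodup) {v : α} (hv : v ∈ l)
    {a b : α → ℕ} {n : ℕ} (hab : a v < b v) (hn : b v < n)
    (hout : ∀ u ∈ l, u ≠ v → (a u < a v ∨ b v < a u) ∧ (b u < a v ∨ b v < b u)) :
    [v, v] <:+: slotWord l a b n := by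
  have hmid : (List.range' (a v) (b v + 1 - a v)).flatMap
      (fun i => l.filter fun u => a u = i ∨ b u = i) = [v] ++ [v] := by
    rw [← (List.pairwise_singleton _ v).flatMap_range'_slots_eq_append_self (a := a) (b := b)
      (m := a v) (t := b v) (k := b v + 1 - a v)
      (by simp only [List.mem_singleton, forall_eq]; omega)]
    refine List.flatMap_congr fun i hi => ?_
    rw [← hl.filter_eq_singleton hv, List.filter_filter]
    refine List.filter_congr fun u hu => ?_
    have := List.mem_range'_1.1 hi
    by_cases huv : u = v
    · simp [huv]
    · have := hout u hu huv
      simp only [huv, decide_false, Bool.and_false, decide_eq_false_iff_not]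
      omega
  rw [slotWord, List.range_eq_range', List.range'_eq_range'_append_range' (t := a v) (by omega)
    (by omega), List.range'_eq_range'_append_range' (s := a v) (t := b v + 1) (by omega) (by omega),
    List.flatMap_append, List.flatMap_append, Nat.sub_zero, hmid, ← List.append_assoc]
  exact List.infix_append _ [v, v] _

end SlotWord

section TopologicalSort

variable {E : V → V → Prop} {l : List V}

def IsTopologicalSort (E : V → V → Prop) (l : List V) : Prop :=
  l.Nodup ∧ (∀ x, x ∈ l) ∧ l.Pairwise fun x y => ¬TransGen E y x

open Finset in
theorem Acyclic.exists_isTopologicalSort [Fintype V] (hE : Acyclic E) :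
    ∃ l, IsTopologicalSort E l := by
  classical
  let rank (u : V) : ℕ := #{z | TransGen E z u}
  have rank_lt {x y : V} (h : TransGen E x y) : rank x < rank y :=
    card_lt_card ⟨fun z hz => by
      simp only [mem_filter, mem_univ, true_and] at hz ⊢; exact hz.trans h,
      fun hsub => hE x (by simpa using hsub (by simpa using h))⟩
  have hperm := List.mergeSort_perm univ.toList fun a b => rank a ≤ rank b
  refine ⟨_, hperm.nodup_iff.2 (nodup_toList _),
    fun x => hperm.mem_iff.2 (mem_toList.2 (mem_univ x)), ?_⟩
  refine (List.pairwise_mergeSort (fun a b c => ?_) (fun a b => ?_) _).imp fun h h' => ?_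
  · simpa using Nat.le_trans
  · simpa using Nat.le_total _ _
  · exact (rank_lt h').not_ge (by simpa using h)

theorem IsTopologicalSort.filter_eq_pair [DecidableEq V] (hl : IsTopologicalSort E l) {x y : V}
    (hxy : TransGen E x y) (hne : x ≠ y) :
    l.filter (fun z => z = x ∨ z = y) = [x, y] := by
  refine List.Pairwise.eq_pair ?_ (by simpa using hl.2.1 x) (by simpa using hl.2.1 y) hne
  refine ((hl.1.filter _).and (hl.2.2.filter _)).imp_of_mem fun hw hz h => ?_
  simp only [List.mem_filter, decide_eq_true_eq] at hw hz
  rcases hw.2 with rfl | rfl <;> rcases hz.2 with rfl | rfl <;> simp_all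

end TopologicalSort

section Slots

variable {E : V → V → Prop}

/- Slots of the block of `v`: `0` non-descendants of `v` other than `v`; `1` ancestors that are not
in-neighbours; `2` `v`; `3` out-neighbours; `4` in-neighbours; `5` `v`; `6` descendants that are
not out-neighbours; `7` vertices incomparable with `v`; `8` descendants. -/
open Classical in
noncomputable def firstSlot (E : V → V → Prop) (v u : V) : ℕ :=
  if u = v then 2 else if E v u then 3 else if TransGen E v u then 6 else 0

open Classical in
noncomputable def secondSlot (E : V → V → Prop) (v u : V) : ℕ :=
  if u = v then 5 else if E u v then 4 else if TransGen E u v then 1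
  else if TransGen E v u then 8 else 7

@[simp] theorem firstSlot_self (v : V) : firstSlot E v v = 2 := by simp [firstSlot]

@[simp] theorem secondSlot_self (v : V) : secondSlot E v v = 5 := by simp [secondSlot]

theorem secondSlot_lt_nine (v u : V) : secondSlot E v u < 9 := by
  unfold secondSlot
  split_ifs <;> omega

theorem firstSlot_lt_secondSlot (hE : Acyclic E) (v u : V) :
    firstSlot E v u < secondSlot E v u := by
  have hasymm : TransGen E v u → ¬TransGen E u v := fun h h' => hE v (h.trans h')
  unfold firstSlot secondSlot
  split_ifs <;> first | omega | grind

theorem firstSlot_le_of_arc (hst : SemiTransitive E) (v : V) {x y : V} (hxy : E x y) :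
    firstSlot E v x ≤ firstSlot E v y := by
  have hcycle : y = v → x ≠ v ∧ ¬TransGen E v x := fun hy =>
    ⟨fun hx => hst.1 v (.single (by rwa [hx, hy] at hxy)),
      fun h => hst.1 v (h.tail (by rwa [hy] at hxy))⟩
  have hshortcut : TransGen E v x → E v y → E v x := fun h h' =>
    (hst.arcs_of_transGen h' h (.single hxy)).1
  unfold firstSlot
  split_ifs <;> first | omega | grind

theorem firstSlot_lt_secondSlot_of_arc (hst : SemiTransitive E) (v : V) {x y : V}
    (hxy : E x y) : firstSlot E v y < secondSlot E v x := by
  have hshortcut : TransGen E x v → TransGen E v y → E x v ∧ E v y := hst.arcs_of_transGen hxy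
  unfold firstSlot secondSlot
  split_ifs <;> first | omega | grind

theorem secondSlot_le_of_arc (hst : SemiTransitive E) (v : V) {x y : V} (hxy : E x y) :
    secondSlot E v x ≤ secondSlot E v y := by
  have hasymm : TransGen E v y → ¬TransGen E y v := fun h h' => hst.1 v (h.trans h')
  have hpath : TransGen E y v → TransGen E x v := .head hxy
  have hshortcut : E x v → TransGen E y v → E y v := fun h h' =>
    (hst.arcs_of_transGen h (.single hxy) h').2
  unfold secondSlot
  split_ifs <;> first | omega | grind

theorem slots_of_not_adj {u v : V} (huv : u ≠ v) (h₁ : ¬E u v) (h₂ : ¬E v u) :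
    (firstSlot E v u < 2 ∨ 5 < firstSlot E v u) ∧
      (secondSlot E v u < 2 ∨ 5 < secondSlot E v u) := by
  unfold firstSlot secondSlot
  split_ifs <;> first | omega | contradiction

end Slots

section RepresentingWord

variable [DecidableEq V] {E : V → V → Prop} {l : List V}

noncomputable def block (E : V → V → Prop) (l : List V) (v : V) : List V :=
  slotWord l (firstSlot E v) (secondSlot E v) 9

theorem count_block (hl : IsTopologicalSort E l) (hE : Acyclic E) (v u : V) :
    (block E l v).count u = 2 :=
  count_slotWord hl.1 (hl.2.1 u) (firstSlot_lt_secondSlot hE v u) (secondSlot_lt_nine v u)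

theorem filter_block_of_arc (hl : IsTopologicalSort E l) (hst : SemiTransitive E) (v : V)
    {x y : V} (hxy : E x y) :
    (block E l v).filter (fun z => z = x ∨ z = y) = [x, y] ++ [x, y] := by
  have hne : x ≠ y := by rintro rfl; exact hst.1 x (.single hxy)
  rw [block, filter_slotWord, hl.filter_eq_pair (.single hxy) hne]
  refine List.pairwise_pair.2 ⟨firstSlot_le_of_arc hst v hxy, secondSlot_le_of_arc hst v hxy⟩
    |>.slotWord_eq_append_self (t := secondSlot E v x) ?_
  simp only [List.mem_cons, List.not_mem_nil, or_false, forall_eq_or_imp, forall_eq]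
  exact ⟨⟨firstSlot_lt_secondSlot hst.1 v x, le_rfl, secondSlot_lt_nine v x⟩,
    firstSlot_lt_secondSlot_of_arc hst v hxy, secondSlot_le_of_arc hst v hxy,
    secondSlot_lt_nine v y⟩

theorem infix_filter_block (hl : IsTopologicalSort E l) {u v : V} (huv : u ≠ v) (h₁ : ¬E u v)
    (h₂ : ¬E v u) : [v, v] <:+: (block E l v).filter (fun z => z = u ∨ z = v) := by
  rw [block, filter_slotWord]
  refine infix_slotWord (hl.1.filter _) (by simpa using hl.2.1 v) (by simp)
    (secondSlot_lt_nine v v) fun w hw hwv => ?_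
  obtain ⟨-, rfl⟩ : w ∈ l ∧ w = u := by simpa [hwv] using hw
  simpa only [firstSlot_self, secondSlot_self] using slots_of_not_adj huv h₁ h₂

theorem alternate_iff (W : List V) (x y : V) :
    Alternate W x y ↔ (W.filter fun z => z = x ∨ z = y).IsChain (· ≠ ·) :=
  Iff.rfl

theorem alternate_comm (W : List V) (x y : V) : Alternate W x y ↔ Alternate W y x := by
  simp only [alternate_iff, or_comm]

theorem isChain_ne_flatMap_const {α β : Type*} {x y : α} (hxy : x ≠ y) (S : List β) :
    (S.flatMap fun _ => [x, y] ++ [x, y]).IsChain (· ≠ ·) := by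
  suffices ∀ S : List β, (y :: S.flatMap fun _ => [x, y] ++ [x, y]).IsChain (· ≠ ·) by
    cases S with
    | nil => exact .nil
    | cons _ S => simpa [List.isChain_cons_cons, hxy, hxy.symm] using this S
  intro S
  induction S with
  | nil => exact .singleton y
  | cons _ S ih => simpa [List.isChain_cons_cons, hxy, hxy.symm] using ih

noncomputable def repWord (E : V → V → Prop) (l S : List V) : List V :=
  S.flatMap (block E l)

theorem count_repWord (hl : IsTopologicalSort E l) (hE : Acyclic E) (S : List V) (u : V) :
    (repWord E l S).count u = 2 * S.length := by
  simp [repWord, List.count_flatMap, Function.comp_def, count_block hl hE, mul_comm]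

theorem mem_repWord (hl : IsTopologicalSort E l) (hE : Acyclic E) {S : List V} {v : V}
    (hv : v ∈ S) (u : V) : u ∈ repWord E l S :=
  List.mem_flatMap.2 ⟨v, hv, List.count_pos_iff.1 (by rw [count_block hl hE]; omega)⟩

theorem alternate_repWord_of_arc (hl : IsTopologicalSort E l) (hst : SemiTransitive E)
    (S : List V) {x y : V} (hxy : E x y) : Alternate (repWord E l S) x y := by
  have hne : x ≠ y := by rintro rfl; exact hst.1 x (.single hxy)
  rw [alternate_iff, repWord, List.filter_flatMap,
    List.flatMap_congr fun v _ => filter_block_of_arc hl hst v hxy]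
  exact isChain_ne_flatMap_const hne S

theorem not_alternate_repWord (hl : IsTopologicalSort E l) {S : List V} {u v : V} (hv : v ∈ S)
    (huv : u ≠ v) (h₁ : ¬E u v) (h₂ : ¬E v u) : ¬Alternate (repWord E l S) u v := by
  rw [alternate_iff, repWord, List.filter_flatMap]
  intro h
  simpa using h.infix ((infix_filter_block hl huv h₁ h₂).trans (List.infix_flatMap_of_mem hv
    fun w => (block E l w).filter fun z => z = u ∨ z = v))

theorem adj_iff_alternate_repWord {G : SimpleGraph V} (hor : IsOrientation G E)
    (hst : SemiTransitive E) (hl : IsTopologicalSort E l) {S : List V} {x y : V} (hxy : x ≠ y)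
    (hcover : ¬G.Adj x y → x ∈ S ∨ y ∈ S) : G.Adj x y ↔ Alternate (repWord E l S) x y := by
  refine ⟨fun hadj => ?_, fun halt => by_contra fun hnadj => ?_⟩
  · rcases (hor x y).1 hadj with h | h
    · exact alternate_repWord_of_arc hl hst S h
    · exact (alternate_comm _ _ _).2 (alternate_repWord_of_arc hl hst S h)
  · have h₁ : ¬E x y := fun h => hnadj ((hor x y).2 (.inl h))
    have h₂ : ¬E y x := fun h => hnadj ((hor x y).2 (.inr h))
    rcases hcover hnadj with hx | hy
    · exact not_alternate_repWord hl hx hxy.symm h₂ h₁ ((alternate_comm _ _ _).1 halt)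
    · exact not_alternate_repWord hl hy hxy h₁ h₂ halt

end RepresentingWord

/-- A semi-transitively orientable graph is word-representable; moreover,
if `G` is not complete then `G` is `2(n - κ)`-word-representable, where `n` is the
number of vertices and `κ` the size of a maximum clique of `G`. -/
theorem stmt_3 {V : Type*} [Fintype V] [DecidableEq V] (G : SimpleGraph V)
    (E : V → V → Prop) (hor : IsOrientation G E) (hst : SemiTransitive E) :
    WordRepresentable G ∧
    (G ≠ ⊤ → ∀ κ : ℕ, IsGreatest {m : ℕ | ∃ s : Finset V, G.IsNClique m s} κ →
      KWordRepresentable G (2 * (Fintype.card V - κ))) := by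
  obtain ⟨l, hl⟩ := hst.1.exists_isTopologicalSort
  refine ⟨⟨repWord E l l, fun u => mem_repWord hl hst.1 (hl.2.1 u) u,
    fun x y hxy => adj_iff_alternate_repWord hor hst hl hxy fun _ => .inl (hl.2.1 x)⟩, ?_⟩
  intro hne κ hκ
  obtain ⟨K, hK⟩ := hκ.1
  obtain ⟨a, ha⟩ : Kᶜ.Nonempty := by
    rw [Finset.nonempty_iff_ne_empty, Ne, Finset.compl_eq_empty_iff]
    rintro rfl
    exact hne (SimpleGraph.isClique_univ.1 (by simpa using hK.isClique))
  refine ⟨repWord E l Kᶜ.toList, fun u => ?_,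
    fun u => mem_repWord hl hst.1 (Finset.mem_toList.2 ha) u, fun x y hxy => ?_⟩
  · rw [count_repWord hl hst.1, Finset.length_toList, Finset.card_compl, hK.card_eq]
  · refine adj_iff_alternate_repWord hor hst hl hxy fun hnadj => ?_
    by_contra! hxK
    simp only [Finset.mem_toList, Finset.mem_compl, not_not] at hxK
    exact hnadj (hK.isClique hxK.1 hxK.2 hxy)
end

section
/- Let G be a graph whose girth is strictly greater than its chromatic number. Then G admits a semi-transitive orientation (hence is word-representable): orienting each edge from smaller to larger color in an optimal proper coloring gives a semi-transitive orientation. -/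
variable {V : Type*}

/-! In the orientation by colours, colours strictly increase along directed paths, so a
directed path has at most `χ(G)` vertices. A directed path of length at least two from `x` to `y`,
with `x → y` an arc, would close a cycle of length at most `χ(G) < girth G`. So every arc is
the only directed path between its ends, and semi-transitivity holds trivially.

For word-representability, list the vertices in a topological order `L` and append, for every
non-adjacent pair `u`, `w`, a block made of sublists of `L` in which every arc `x → y` still
reads `x y x y` while `u` and `w` do not alternate. If `u →⁺ w`, let `D` be the vertices below
`u`, `U` those above `w` and `M` the rest; no arc goes from `D` to `U` (it would have a detour
through `u` and `w`), so every arc reads `x y x y` in `D M D U M U`, whereas `u`, `w` read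
`u u w w`. If `u` and `w` are incomparable, use `D(u) D(u)ᶜ D(w) D(w)ᶜ`, where they read
`u w w u`. -/

open Relation

/-- A *detour* of an arc `x → y` is a directed path from `x` to `y` of length at least two. -/
def NoDetours (E : V → V → Prop) : Prop :=
  ∀ ⦃x y z : V⦄, E x y → E x z → TransGen E z y → False

section Digraph

variable {E : V → V → Prop}

lemma lt_of_transGen {α : Type*} [Preorder α] {C : V → α}
    (hC : ∀ ⦃a b⦄, E a b → C a < C b) {a b : V} (h : TransGen E a b) : C a < C b := by
  simpa [transGen_eq_self] using TransGen.lift C hC _ _ h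

lemma acyclic_of_lt {α : Type*} [Preorder α] (C : V → α)
    (hC : ∀ ⦃a b⦄, E a b → C a < C b) : Acyclic E :=
  fun _ h => lt_irrefl _ (lt_of_transGen hC h)

lemma Acyclic.ne (hE : Acyclic E) {a b : V} (h : TransGen E a b) : a ≠ b := by
  rintro rfl
  exact hE a h

lemma transGen_zero_last : ∀ {k : ℕ} (v : Fin (k + 2) → V),
    (∀ i : Fin (k + 1), E (v i.castSucc) (v i.succ)) → TransGen E (v 0) (v (Fin.last (k + 1)))
  | 0, _, hv => .single (hv 0)
  | _ + 1, v, hv =>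
    .tail (transGen_zero_last (Fin.init v) fun i => hv i.castSucc) (hv (Fin.last _))

lemma SemiTransitive.of_noDetours (hacyc : Acyclic E) (hE : NoDetours E) : SemiTransitive E := by
  refine ⟨hacyc, fun k v hv harc i j hij => ?_⟩
  rcases k with _ | _ | k
  · exact absurd hij (by omega)
  · fin_cases i <;> fin_cases j <;> first | exact harc | exact absurd hij (by decide)
  · exact (hE harc (hv 0) (transGen_zero_last (Fin.tail v) fun i => hv i.succ)).elim

end Digraph

namespace SimpleGraph

variable {G : SimpleGraph V}

lemma exists_walk_isChain_of_reflTransGen {E : V → V → Prop}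
    (hEG : ∀ ⦃a b⦄, E a b → G.Adj a b) {a b : V} (h : ReflTransGen E a b) :
    ∃ p : G.Walk a b, p.support.IsChain E := by
  induction h using ReflTransGen.head_induction_on with
  | refl => exact ⟨.nil, by simp⟩
  | head hac _ ih =>
    obtain ⟨p, hp⟩ := ih
    refine ⟨.cons (hEG hac) p, ?_⟩
    rw [Walk.support_cons, ← p.cons_tail_support] at *
    exact hp.cons_cons hac

variable {α : Type*} [LinearOrder α]

lemma Coloring.isOrientation (C : G.Coloring α) :
    IsOrientation G (fun x y => G.Adj x y ∧ C x < C y) := by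
  intro x y
  refine ⟨fun h => (C.valid h).lt_or_gt.imp (⟨h, ·⟩) (⟨h.symm, ·⟩), ?_⟩
  rintro (⟨h, -⟩ | ⟨h, -⟩)
  exacts [h, h.symm]

lemma Coloring.noDetours_of_card_lt_girth [Fintype α] (C : G.Coloring α)
    (h : Fintype.card α < G.girth) : NoDetours (fun x y => G.Adj x y ∧ C x < C y) := by
  intro x y z hxy hxz hzy
  obtain ⟨p, hp⟩ := exists_walk_isChain_of_reflTransGen (fun _ _ h => h.1) hzy.to_reflTransGen
  let w : G.Walk x y := .cons hxz.1 p
  have hchain : w.support.IsChain fun a b => G.Adj a b ∧ C a < C b := by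
    simp only [w, Walk.support_cons]
    rw [← p.cons_tail_support] at hp ⊢
    exact hp.cons_cons hxz
  have hmono : (w.support.map C).Pairwise (· < ·) :=
    ((List.isChain_map C).2 (hchain.imp fun _ _ h => h.2)).pairwise
  have hnodup : w.support.Nodup := hmono.nodup.of_map C
  have hxp : x ∉ p.support := (List.nodup_cons.1 (by simpa [w] using hnodup)).1
  have hcycle : (Walk.cons hxy.1.symm w).IsCycle := by
    refine (Walk.cons_isCycle_iff _ _).2 ⟨(Walk.isPath_def _).2 hnodup, ?_⟩
    simp only [w, Walk.edges_cons, List.mem_cons, Sym2.eq_iff, not_or]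
    refine ⟨⟨fun ⟨hyx, _⟩ => hxy.1.ne hyx.symm, fun ⟨hyz, _⟩ => ?_⟩,
      fun he => hxp (p.snd_mem_support_of_mem_edges he)⟩
    exact (lt_of_transGen (fun _ _ h => h.2) hzy).ne (congrArg C hyz.symm)
  have : G.girth ≤ Fintype.card α :=
    calc G.girth ≤ (Walk.cons hxy.1.symm w).length := girth_le_length hcycle
      _ = (w.support.map C).length := by simp
      _ ≤ Fintype.card α := hmono.nodup.length_le_card
  omega

end SimpleGraph

namespace Word

lemma isChain_ne_flatten_replicate {x y : V} (hxy : x ≠ y) (k : ℕ) :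
    ((List.replicate k [x, y]).flatten).IsChain (· ≠ ·) := by
  induction k with
  | zero => simp
  | succ k ih =>
    rw [List.replicate_succ, List.flatten_cons, List.isChain_append]
    refine ⟨by simp [hxy], ih, ?_⟩
    cases k <;> simp [hxy.symm]

variable {E : V → V → Prop}

variable (E) in
def downSet (u : V) : Set V := {z | ReflTransGen E z u}

variable (E) in
def upSet (w : V) : Set V := {z | ReflTransGen E w z}

lemma mem_downSet_of_arc {u a b : V} (h : E a b) (hb : b ∈ downSet E u) : a ∈ downSet E u :=
  ReflTransGen.head h hb

lemma mem_upSet_of_arc {w a b : V} (h : E a b) (ha : a ∈ upSet E w) : b ∈ upSet E w :=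
  ReflTransGen.tail ha h

lemma notMem_upSet_of_mem_downSet (hacyc : Acyclic E) {u w a : V} (huw : TransGen E u w)
    (ha : a ∈ downSet E u) : a ∉ upSet E w :=
  fun ha' => hacyc a (TransGen.trans_right ha (huw.trans_left ha'))

lemma not_arc_of_mem_downSet_of_mem_upSet (hE : NoDetours E) {u w x y : V}
    (huw : TransGen E u w) (hnuw : ¬E u w) (hx : x ∈ downSet E u) (hy : y ∈ upSet E w) :
    ¬E x y := by
  intro hxy
  obtain ⟨z, hxz, hzw⟩ : ∃ z, E x z ∧ TransGen E z w := by
    rcases ReflTransGen.cases_head hx with rfl | ⟨a, hxa, hau⟩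
    · obtain ⟨z, hxz, hzw⟩ := TransGen.head'_iff.1 huw
      rcases reflTransGen_iff_eq_or_transGen.1 hzw with rfl | hzw
      · exact absurd hxz hnuw
      · exact ⟨z, hxz, hzw⟩
    · exact ⟨a, hxa, TransGen.trans_right hau huw⟩
  exact hE hxy hxz (hzw.trans_left hy)

variable [DecidableEq V]

def trace (W : List V) (x y : V) : List V := W.filter (fun z => z = x ∨ z = y)

lemma alternate_iff {W : List V} {x y : V} :
    Alternate W x y ↔ (trace W x y).IsChain (· ≠ ·) :=
  Iff.rfl

lemma trace_comm (W : List V) (x y : V) : trace W x y = trace W y x := by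
  simp only [trace, or_comm]

lemma alternate_comm {W : List V} {x y : V} : Alternate W x y ↔ Alternate W y x := by
  rw [alternate_iff, alternate_iff, trace_comm]

lemma trace_append (A B : List V) (x y : V) : trace (A ++ B) x y = trace A x y ++ trace B x y :=
  List.filter_append ..

open Classical in
noncomputable def restrict (L : List V) (S : Set V) : List V := L.filter (· ∈ S)

open Classical in
lemma trace_restrict (L : List V) (S : Set V) (x y : V) :
    trace (restrict L S) x y = (trace L x y).filter (· ∈ S) :=
  List.filter_comm ..

lemma trace_eq_pair_or {L : List V} (hnd : L.Nodup) (hmem : ∀ z, z ∈ L) {x y : V}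
    (hxy : x ≠ y) : trace L x y = [x, y] ∨ trace L x y = [y, x] := by
  refine List.perm_pair.1 ((List.perm_ext_iff_of_nodup (hnd.filter _) (by simp [hxy])).2 ?_)
  simp [hmem]

lemma trace_eq_of_arc {L : List V} (hnd : L.Nodup) (hmem : ∀ z, z ∈ L)
    (htop : L.Pairwise fun a b => ¬E b a) (hacyc : Acyclic E) {x y : V} (h : E x y) :
    trace L x y = [x, y] := by
  refine (trace_eq_pair_or hnd hmem (hacyc.ne (.single h))).resolve_right fun hyx => ?_
  have : (trace L x y).Pairwise fun a b => ¬E b a := htop.sublist List.filter_sublist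
  simp [hyx, h] at this

variable (E) in
def RespectsArcs (W : List V) : Prop :=
  ∀ ⦃x y : V⦄, E x y → ∃ k, trace W x y = (List.replicate k [x, y]).flatten

lemma RespectsArcs.append {A B : List V} (hA : RespectsArcs E A) (hB : RespectsArcs E B) :
    RespectsArcs E (A ++ B) := by
  intro x y h
  obtain ⟨k, hk⟩ := hA h
  obtain ⟨l, hl⟩ := hB h
  exact ⟨k + l, by rw [trace_append, hk, hl, List.replicate_add, List.flatten_append]⟩

lemma respectsArcs_flatten {Bs : List (List V)} (h : ∀ B ∈ Bs, RespectsArcs E B) :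
    RespectsArcs E Bs.flatten := by
  induction Bs with
  | nil => exact fun _ _ _ => ⟨0, rfl⟩
  | cons B Bs ih =>
    exact (h B (by simp)).append (ih fun B' hB' => h B' (by simp [hB']))

lemma RespectsArcs.alternate {W : List V} (hW : RespectsArcs E W) (hacyc : Acyclic E) {x y : V}
    (h : E x y) : Alternate W x y := by
  obtain ⟨k, hk⟩ := hW h
  rw [alternate_iff, hk]
  exact isChain_ne_flatten_replicate (hacyc.ne (.single h)) k

noncomputable def cut (L : List V) (S : Set V) : List V := restrict L S ++ restrict L Sᶜ

variable (E) in
noncomputable def comparableBlock (L : List V) (u w : V) : List V :=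
  restrict L (downSet E u) ++ restrict L (downSet E u ∪ upSet E w)ᶜ ++
    restrict L (downSet E u) ++ restrict L (upSet E w) ++
    restrict L (downSet E u ∪ upSet E w)ᶜ ++ restrict L (upSet E w)

variable (E) in
noncomputable def incomparableBlock (L : List V) (u w : V) : List V :=
  cut L (downSet E u) ++ cut L (downSet E w)

variable (E) in
open Classical in
noncomputable def pairBlock (L : List V) (u w : V) : List V :=
  if TransGen E u w then (if E u w then [] else comparableBlock E L u w)
  -- the block of `(w, u)` deals with `w →⁺ u`
  else if TransGen E w u then [] else incomparableBlock E L u w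

variable (E) in
noncomputable def word [Fintype V] (L : List V) : List V :=
  L ++ ((Finset.univ : Finset (V × V)).toList.map fun q => pairBlock E L q.1 q.2).flatten

section TopologicalOrder

variable {L : List V} (hnd : L.Nodup) (hmem : ∀ z, z ∈ L) (htop : L.Pairwise fun a b => ¬E b a)
  (hacyc : Acyclic E)
include hnd hmem

include htop hacyc in
lemma respectsArcs_self : RespectsArcs E L :=
  fun _ _ h => ⟨1, by simp [trace_eq_of_arc hnd hmem htop hacyc h]⟩

include htop hacyc in
lemma respectsArcs_cut {S : Set V} (hS : ∀ ⦃a b⦄, E a b → b ∈ S → a ∈ S) :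
    RespectsArcs E (cut L S) := by
  intro x y hxy
  refine ⟨1, ?_⟩
  rw [cut, trace_append, trace_restrict, trace_restrict, trace_eq_of_arc hnd hmem htop hacyc hxy]
  by_cases hy : y ∈ S
  · simp [hy, hS hxy hy]
  · by_cases hx : x ∈ S <;> simp [hx, hy]

include htop hacyc in
lemma respectsArcs_incomparableBlock (u w : V) : RespectsArcs E (incomparableBlock E L u w) :=
  (respectsArcs_cut hnd hmem htop hacyc fun _ _ => mem_downSet_of_arc).append
    (respectsArcs_cut hnd hmem htop hacyc fun _ _ => mem_downSet_of_arc)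

include htop hacyc in
lemma respectsArcs_comparableBlock (hE : NoDetours E) {u w : V} (huw : TransGen E u w)
    (hnuw : ¬E u w) : RespectsArcs E (comparableBlock E L u w) := by
  intro x y hxy
  refine ⟨2, ?_⟩
  have hD := mem_downSet_of_arc (u := u) hxy
  have hU := mem_upSet_of_arc (w := w) hxy
  have hDU := not_arc_of_mem_downSet_of_mem_upSet hE huw hnuw (x := x) (y := y)
  have hx := notMem_upSet_of_mem_downSet hacyc huw (a := x)
  have hy := notMem_upSet_of_mem_downSet hacyc huw (a := y)
  simp only [comparableBlock, trace_append, trace_restrict,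
    trace_eq_of_arc hnd hmem htop hacyc hxy]
  by_cases hyD : y ∈ downSet E u
  · simp [hyD, hD hyD, hx (hD hyD), hy hyD]
  by_cases hxU : x ∈ upSet E w
  · simp [hxU, hU hxU, hyD, show x ∉ downSet E u from fun h => hx h hxU]
  by_cases hxD : x ∈ downSet E u
  · by_cases hyU : y ∈ upSet E w
    · exact absurd hxy (hDU hxD hyU)
    · simp [hxD, hyD, hxU, hyU]
  · by_cases hyU : y ∈ upSet E w <;> simp [hxD, hyD, hxU, hyU]

include hacyc in
lemma not_alternate_comparableBlock {u w : V} (huw : TransGen E u w) :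
    ¬Alternate (comparableBlock E L u w) u w := by
  have hu : u ∈ downSet E u := ReflTransGen.refl
  have hw : w ∈ upSet E w := ReflTransGen.refl
  have hwu : w ∉ downSet E u := fun h => hacyc u (huw.trans_left h)
  have huw' : u ∉ upSet E w := notMem_upSet_of_mem_downSet hacyc huw hu
  rw [alternate_iff]
  simp only [comparableBlock, trace_append, trace_restrict]
  rcases trace_eq_pair_or hnd hmem (hacyc.ne huw) with h | h <;>
    simp [h, hu, hw, hwu, huw']

lemma not_alternate_incomparableBlock {u w : V} (hne : u ≠ w) (huw : ¬TransGen E u w)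
    (hwu : ¬TransGen E w u) : ¬Alternate (incomparableBlock E L u w) u w := by
  have hu : u ∈ downSet E u := ReflTransGen.refl
  have hw : w ∈ downSet E w := ReflTransGen.refl
  have hwu' : w ∉ downSet E u :=
    fun h => hwu ((reflTransGen_iff_eq_or_transGen.1 h).resolve_left hne)
  have huw' : u ∉ downSet E w :=
    fun h => huw ((reflTransGen_iff_eq_or_transGen.1 h).resolve_left hne.symm)
  rw [alternate_iff]
  simp only [incomparableBlock, cut, trace_append, trace_restrict]
  rcases trace_eq_pair_or hnd hmem hne with h | h <;> simp [h, hu, hw, hwu', huw']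

include htop hacyc in
lemma respectsArcs_pairBlock (hE : NoDetours E) (u w : V) :
    RespectsArcs E (pairBlock E L u w) := by
  unfold pairBlock
  split_ifs with huw hnuw
  · exact fun _ _ _ => ⟨0, rfl⟩
  · exact respectsArcs_comparableBlock hnd hmem htop hacyc hE huw hnuw
  · exact fun _ _ _ => ⟨0, rfl⟩
  · exact respectsArcs_incomparableBlock hnd hmem htop hacyc u w

include hacyc in
lemma not_alternate_word [Fintype V] {u w : V} (hne : u ≠ w) (hnuw : ¬E u w)
    (hwu : ¬TransGen E w u) : ¬Alternate (word E L) u w := by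
  have hblock : ¬Alternate (pairBlock E L u w) u w := by
    by_cases huw : TransGen E u w
    · simpa [pairBlock, huw, hnuw] using not_alternate_comparableBlock hnd hmem hacyc huw
    · simpa [pairBlock, huw, hwu] using not_alternate_incomparableBlock hnd hmem hne huw hwu
  obtain ⟨s, t, hst⟩ := List.append_of_mem (Finset.mem_toList.2 (Finset.mem_univ (u, w)))
  have hinfix : pairBlock E L u w <:+: word E L :=
    ⟨L ++ (s.map fun q => pairBlock E L q.1 q.2).flatten,
      (t.map fun q => pairBlock E L q.1 q.2).flatten, by simp [word, hst]⟩
  exact fun h => hblock ((alternate_iff.1 h).infix (hinfix.filter _))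

include htop hacyc in
lemma represents_word [Fintype V] (hE : NoDetours E) {G : SimpleGraph V}
    (hGE : IsOrientation G E) : Represents (word E L) G := by
  have hW : RespectsArcs E (word E L) := (respectsArcs_self hnd hmem htop hacyc).append
    (respectsArcs_flatten fun B hB => by
      obtain ⟨q, -, rfl⟩ := List.mem_map.1 hB
      exact respectsArcs_pairBlock hnd hmem htop hacyc hE q.1 q.2)
  refine ⟨fun x => List.mem_append_left _ (hmem x),
    fun x y hne => ⟨fun hxy => ?_, fun halt => ?_⟩⟩
  · rcases (hGE x y).1 hxy with h | h
    exacts [hW.alternate hacyc h, alternate_comm.1 (hW.alternate hacyc h)]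
  · by_contra hxy
    rw [hGE, not_or] at hxy
    by_cases hyx : TransGen E y x
    · exact not_alternate_word hnd hmem hacyc hne.symm hxy.2
        (fun hxy' => hacyc y (hyx.trans hxy')) (alternate_comm.1 halt)
    · exact not_alternate_word hnd hmem hacyc hne hxy.1 hyx halt

end TopologicalOrder

end Word

lemma exists_topological_list [Fintype V] {E : V → V → Prop} {α : Type*} [LinearOrder α]
    (C : V → α) (hC : ∀ ⦃a b⦄, E a b → C a < C b) :
    ∃ L : List V, L.Nodup ∧ (∀ z, z ∈ L) ∧ L.Pairwise fun a b => ¬E b a := by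
  let L := (Finset.univ : Finset V).toList.mergeSort fun a b => decide (C a ≤ C b)
  have hperm : L.Perm Finset.univ.toList := List.mergeSort_perm ..
  refine ⟨L, hperm.nodup_iff.2 (Finset.nodup_toList _), fun z => hperm.mem_iff.2 (by simp), ?_⟩
  refine (List.pairwise_mergeSort (fun a b c => ?_) (fun a b => ?_) _).imp fun hab hba => ?_
  · simpa using le_trans
  · simpa using le_total (C a) (C b)
  · exact (hC hba).not_ge (by simpa using hab)

theorem NoDetours.wordRepresentable [Fintype V] [DecidableEq V] {E : V → V → Prop}
    (hE : NoDetours E) {G : SimpleGraph V} (hGE : IsOrientation G E) {α : Type*} [LinearOrder α]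
    (C : V → α) (hC : ∀ ⦃a b⦄, E a b → C a < C b) : WordRepresentable G := by
  obtain ⟨L, hnd, hmem, htop⟩ := exists_topological_list C hC
  exact ⟨_, Word.represents_word hnd hmem htop (acyclic_of_lt C hC) hE hGE⟩

/-- If the girth of `G` is strictly greater than its chromatic number,
then orienting each edge from smaller to larger color in an optimal proper coloring
gives a semi-transitive orientation, so `G` is word-representable. -/
theorem stmt_8 {V : Type*} [Fintype V] [DecidableEq V] (G : SimpleGraph V)
    (h : G.chromaticNumber < G.girth) :
    (∀ (n : ℕ) (C : G.Coloring (Fin n)), (n : ℕ∞) = G.chromaticNumber →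
      IsOrientation G (fun x y => G.Adj x y ∧ C x < C y) ∧
      SemiTransitive (fun x y => G.Adj x y ∧ C x < C y)) ∧
    WordRepresentable G := by
  have hnoDetours {n : ℕ} (C : G.Coloring (Fin n)) (hn : (n : ℕ∞) = G.chromaticNumber) :
      NoDetours (fun x y => G.Adj x y ∧ C x < C y) :=
    C.noDetours_of_card_lt_girth (by rw [← hn] at h; simpa using h)
  have hacyc {n : ℕ} (C : G.Coloring (Fin n)) : Acyclic (fun x y => G.Adj x y ∧ C x < C y) :=
    acyclic_of_lt C fun _ _ h => h.2
  refine ⟨fun n C hn => ⟨C.isOrientation, .of_noDetours (hacyc C) (hnoDetours C hn)⟩, ?_⟩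
  obtain ⟨C⟩ := G.colorable_chromaticNumber_of_fintype
  exact (hnoDetours C (ENat.natCast_toNat h.ne_top)).wordRepresentable C.isOrientation C
    fun _ _ h => h.2
end

section
/- If letters x0 and xt alternate in a word W and for every pair of consecutive indices i, xi and x(i+1) alternate in W with the first occurrence of xi preceding that of x(i+1) (for a sequence x0, x1, …, xt), and the first occurrence of x0 precedes that of xt, then for all 0 ≤ j < k ≤ t, the letters xj and xk alternate in W with xj's first occurrence preceding xk's. -/
/-! If `a` occurs before `b` in `W`, then `a` and `b` alternate iff every prefix of `W` contains
as many `a`s as `b`s or exactly one more. Along the chain `x 0, …, x t` the number of occurrences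
of `x i` in a fixed prefix is therefore non-increasing in `i`; for `j < k` it is sandwiched as
`#(x t) ≤ #(x k) ≤ #(x j) ≤ #(x 0) ≤ #(x t) + 1`, so `x j` and `x k` alternate. -/

variable {V : Type*}

section PrefixBalanced

open List

variable [DecidableEq V]

def PrefixBalanced (W : List V) (a b : V) : Prop :=
  ∀ u, u <+: W → u.count b ≤ u.count a ∧ u.count a ≤ u.count b + 1

theorem prefixBalanced_nil (a b : V) : PrefixBalanced [] a b := by
  intro u hu
  simp [prefix_nil.mp hu]

theorem prefixBalanced_cons_self_iff {a b : V} (hab : a ≠ b) (W : List V) :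
    PrefixBalanced (a :: W) a b ↔ PrefixBalanced W b a := by
  simp only [PrefixBalanced, prefix_cons_iff, forall_eq_or_imp, count_nil, le_refl, zero_le,
    true_and, forall_exists_index, and_imp]
  constructor
  · intro h u hu
    have := h (a :: u) u rfl hu
    simp only [count_cons_self, count_cons_of_ne hab] at this
    omega
  · rintro h _ u rfl hu
    have := h u hu
    simp only [count_cons_self, count_cons_of_ne hab]
    omega

theorem not_prefixBalanced_cons {a b : V} (hab : a ≠ b) (W : List V) :
    ¬ PrefixBalanced (b :: W) a b := by
  intro h
  simpa [hab] using (h [b] (by simp)).1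

theorem isChain_ne_and_head_iff_prefixBalanced (a b : V) (hab : a ≠ b) :
    ∀ W : List V, (∀ z ∈ W, z = a ∨ z = b) →
      (W.IsChain (· ≠ ·) ∧ (∀ z ∈ W.head?, z = a) ↔ PrefixBalanced W a b)
  | [], _ => by simp [prefixBalanced_nil]
  | w :: W, hW => by
    obtain hw | hw := hW w mem_cons_self
    · subst w
      have hW' : ∀ z ∈ W, z = b ∨ z = a := fun z hz => (hW z (mem_cons_of_mem _ hz)).symm
      have hhead : (∀ z ∈ W.head?, a ≠ z) ↔ ∀ z ∈ W.head?, z = b := by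
        refine forall₂_congr fun z hz => ?_
        rcases hW' z (mem_of_mem_head? hz) with hz | hz <;> subst z <;> simp [hab]
      rw [prefixBalanced_cons_self_iff hab,
        ← isChain_ne_and_head_iff_prefixBalanced b a hab.symm W hW', isChain_cons, hhead]
      simp [and_comm]
    · subst w
      simp [hab.symm, not_prefixBalanced_cons hab]

theorem prefixBalanced_filter_iff {p : V → Bool} {a b : V} (ha : p a) (hb : p b) (W : List V) :
    PrefixBalanced (W.filter p) a b ↔ PrefixBalanced W a b := by
  simp only [PrefixBalanced, prefix_filter_iff, forall_exists_index, and_imp]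
  constructor
  · intro h u hu
    simpa only [count_filter ha, count_filter hb] using h _ u hu rfl
  · rintro h _ u hu rfl
    simpa only [count_filter ha, count_filter hb] using h u hu

theorem head?_filter_eq_of_idxOf_lt {a b : V} :
    ∀ {W : List V}, W.idxOf a < W.idxOf b → (W.filter (fun z => z = a ∨ z = b)).head? = some a
  | [], h => by simp at h
  | w :: W, h => by
    by_cases hwa : w = a
    · simp [hwa]
    by_cases hwb : w = b
    · simp [hwb] at h
    rw [idxOf_cons_ne _ hwa, idxOf_cons_ne _ hwb] at h
    simpa [filter_cons, hwa, hwb] using head?_filter_eq_of_idxOf_lt (Nat.lt_of_succ_lt_succ h)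

theorem alternate_iff_prefixBalanced {W : List V} {a b : V} (h : W.idxOf a < W.idxOf b) :
    Alternate W a b ↔ PrefixBalanced W a b := by
  have hab : a ≠ b := fun he => h.ne (by rw [he])
  have hmem : ∀ z ∈ W.filter (fun z => z = a ∨ z = b), z = a ∨ z = b := by
    intro z hz
    simpa using (mem_filter.mp hz).2
  rw [← prefixBalanced_filter_iff (p := fun z => z = a ∨ z = b) (by simp) (by simp),
    ← isChain_ne_and_head_iff_prefixBalanced a b hab _ hmem, head?_filter_eq_of_idxOf_lt h]
  exact ⟨fun halt => ⟨halt, by simp⟩, And.left⟩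

theorem PrefixBalanced.of_count_le {W : List V} {a b c d : V} (h : PrefixBalanced W a d)
    (hcount : ∀ u, u <+: W → u.count d ≤ u.count c ∧ u.count c ≤ u.count b ∧
      u.count b ≤ u.count a) :
    PrefixBalanced W b c := by
  intro u hu
  have := h u hu
  have := hcount u hu
  omega

theorem antitoneOn_count_of_alternate_succ {W u : List V} (hu : u <+: W) {t : ℕ} {x : ℕ → V}
    (hconsec : ∀ i < t, Alternate W (x i) (x (i + 1)) ∧ W.idxOf (x i) < W.idxOf (x (i + 1))) :
    AntitoneOn (fun i => u.count (x i)) (Set.Iic t) := by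
  refine antitoneOn_of_succ_le Set.ordConnected_Iic fun i _ _ hi => ?_
  have hi : i < t := Order.succ_le_iff.mp hi
  exact ((alternate_iff_prefixBalanced (hconsec i hi).2).mp (hconsec i hi).1 u hu).1

end PrefixBalanced

theorem stmt_19_general {V : Type*} [DecidableEq V] (W : List V) (t : ℕ) (x : ℕ → V)
    (hconsec : ∀ i < t, Alternate W (x i) (x (i + 1)) ∧
      W.idxOf (x i) < W.idxOf (x (i + 1)))
    (h0t : Alternate W (x 0) (x t)) :
    ∀ j k : ℕ, j < k → k ≤ t →
      Alternate W (x j) (x k) ∧ W.idxOf (x j) < W.idxOf (x k) := by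
  have hidx : StrictMonoOn (fun i => W.idxOf (x i)) (Set.Iic t) :=
    strictMonoOn_Iic_of_lt_succ fun i hi => (hconsec i hi).2
  have mem : ∀ {i}, i ≤ t → i ∈ Set.Iic t := Set.mem_Iic.mpr
  intro j k hjk hkt
  have hjk_idx : W.idxOf (x j) < W.idxOf (x k) := hidx (mem (by omega)) (mem hkt) hjk
  have h0t_idx : W.idxOf (x 0) < W.idxOf (x t) := hidx (mem (Nat.zero_le t)) (mem le_rfl) (by omega)
  refine ⟨(alternate_iff_prefixBalanced hjk_idx).mpr ?_, hjk_idx⟩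
  refine ((alternate_iff_prefixBalanced h0t_idx).mp h0t).of_count_le fun u hu => ?_
  have hcount := antitoneOn_count_of_alternate_succ hu hconsec
  exact ⟨hcount (mem hkt) (mem le_rfl) hkt, hcount (mem (by omega)) (mem hkt) hjk.le,
    hcount (mem (Nat.zero_le t)) (mem (by omega)) (Nat.zero_le j)⟩

/-- If `x 0` and `x t` alternate in `W`, consecutive letters `x i`,
`x (i+1)` alternate with the first occurrence of `x i` preceding that of `x (i+1)`,
and the first occurrence of `x 0` precedes that of `x t`, then all pairs `x j`, `x k`
with `j < k ≤ t` alternate with `x j`'s first occurrence preceding `x k`'s. -/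
theorem stmt_19 {V : Type*} [DecidableEq V] (W : List V) (t : ℕ) (x : ℕ → V)
    (hmem : ∀ i ≤ t, x i ∈ W)
    (hconsec : ∀ i < t, Alternate W (x i) (x (i + 1)) ∧
      W.idxOf (x i) < W.idxOf (x (i + 1)))
    (h0t : Alternate W (x 0) (x t))
    (hfirst : W.idxOf (x 0) < W.idxOf (x t)) :
    ∀ j k : ℕ, j < k → k ≤ t →
      Alternate W (x j) (x k) ∧ W.idxOf (x j) < W.idxOf (x k) :=
  stmt_19_general W t x hconsec h0t
end
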